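/- Let X and Y be n×n complex matrices. For every real λ, −Y/2 + e^{−λY/2} ( e^{−λX/2} Y e^{λX/2} + X/2 ) e^{λY/2} = Σ_{ℓ≥0} f_{1,ℓ} λ^ℓ, where the series converges absolutely, f_{1,0} = (X+Y)/2, and for ℓ ≥ 1, f_{1,ℓ} = ((−1)^ℓ/2^ℓ) ( (1/(2·ℓ!)) ad_Y^ℓ X + Σ_{j=0}^{ℓ} (1/(j!·(ℓ−j)!)) ad_Y^{ℓ−j} ad_X^j Y ). -/

import Mathlib

attribute [local instance] Matrix.linftyOpNormedAddCommGroup Matrix.linftyOpNormedRing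
  Matrix.linftyOpNormedAlgebra Matrix.linftyOpNormedSpace

/-- Iterated adjoint: `adPow A j B = ad_A^j B`, where `ad_A B = [A, B]`. -/
def adPow {m : ℕ} (A : Matrix (Fin m) (Fin m) ℂ) (j : ℕ) (B : Matrix (Fin m) (Fin m) ℂ) :
    Matrix (Fin m) (Fin m) ℂ :=
  (fun C => ⁅A, C⁆)^[j] B

/-!
Put `μ = -λ/2`. Conjugation by an exponential is the exponential of the adjoint action,
`exp(μA) B exp(-μA) = exp(μ ad_A) B`, so the left-hand side equals
`-Y/2 + exp(μ ad_Y) (exp(μ ad_X) Y + X/2)`, computed in the Banach algebra of bounded operators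
on matrices. Expanding `exp(μ ad_Y) * exp(μ ad_X)` as the Cauchy product of two absolutely
convergent exponential series and evaluating at `Y` gives the coefficients `f_{1,ℓ}`, and the
absolute convergence passes to the evaluated series through the operator norm.
-/

open NormedSpace Finset
open scoped Nat

section ApplyCLM

variable {𝕂 E F ι : Type*} [RCLike 𝕂] [NormedAddCommGroup E] [NormedSpace 𝕂 E]
  [NormedAddCommGroup F] [NormedSpace 𝕂 F] {T : ι → E →L[𝕂] F}

lemma HasSum.clm_apply {S : E →L[𝕂] F} (hT : HasSum T S) (v : E) :
    HasSum (fun n => T n v) (S v) := by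
  simpa only [ContinuousLinearMap.apply_apply] using hT.mapL (ContinuousLinearMap.apply 𝕂 F v)

lemma Summable.norm_clm_apply (hT : Summable fun n => ‖T n‖) (v : E) :
    Summable fun n => ‖T n v‖ :=
  (hT.mul_right ‖v‖).of_nonneg_of_le (fun _ => norm_nonneg _) fun n => (T n).le_opNorm v

end ApplyCLM

section BanachAlgebra

variable (𝕂 : Type*) {𝔸 : Type*} [RCLike 𝕂] [NormedRing 𝔸] [NormedAlgebra 𝕂 𝔸]

noncomputable def adCLM (a : 𝔸) : 𝔸 →L[𝕂] 𝔸 :=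
  ContinuousLinearMap.mul 𝕂 𝔸 a - (ContinuousLinearMap.mul 𝕂 𝔸).flip a

@[simp]
lemma adCLM_apply (a b : 𝔸) : adCLM 𝕂 a b = a * b - b * a := rfl

lemma adCLM_smul (c : 𝕂) (a : 𝔸) : adCLM 𝕂 (c • a) = c • adCLM 𝕂 a := by
  ext b
  simp [smul_sub]

variable {𝕂}

lemma summable_norm_expSeries_mul_expSeries (x y : 𝔸) :
    Summable fun n => ‖∑ kl ∈ antidiagonal n,
      ((kl.1 ! : 𝕂)⁻¹ • x ^ kl.1) * ((kl.2 ! : 𝕂)⁻¹ • y ^ kl.2)‖ :=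
  summable_norm_sum_mul_antidiagonal_of_summable_norm (f := fun n => (n ! : 𝕂)⁻¹ • x ^ n)
    (g := fun n => (n ! : 𝕂)⁻¹ • y ^ n) (norm_expSeries_summable' x) (norm_expSeries_summable' y)

lemma summable_norm_expSeries_adCLM_apply (x b : 𝔸) :
    Summable fun n => ‖((n ! : 𝕂)⁻¹ • adCLM 𝕂 x ^ n) b‖ :=
  (norm_expSeries_summable' (adCLM 𝕂 x)).norm_clm_apply b

lemma summable_norm_expSeries_mul_expSeries_adCLM_apply (x y b : 𝔸) :
    Summable fun n => ‖(∑ kl ∈ antidiagonal n,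
      ((kl.1 ! : 𝕂)⁻¹ • adCLM 𝕂 x ^ kl.1) * ((kl.2 ! : 𝕂)⁻¹ • adCLM 𝕂 y ^ kl.2)) b‖ :=
  (summable_norm_expSeries_mul_expSeries (adCLM 𝕂 x) (adCLM 𝕂 y)).norm_clm_apply b

variable [CompleteSpace 𝔸]

lemma hasSum_expSeries_mul_expSeries (x y : 𝔸) :
    HasSum (fun n => ∑ kl ∈ antidiagonal n,
      ((kl.1 ! : 𝕂)⁻¹ • x ^ kl.1) * ((kl.2 ! : 𝕂)⁻¹ • y ^ kl.2)) (exp x * exp y) := by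
  rw [exp_eq_tsum 𝕂, tsum_mul_tsum_eq_tsum_sum_antidiagonal_of_summable_norm
    (norm_expSeries_summable' x) (norm_expSeries_summable' y)]
  exact (summable_norm_expSeries_mul_expSeries x y).of_norm.hasSum

lemma exp_apply_eq_of_pow_apply {E : Type*} [NormedAddCommGroup E] [NormedSpace 𝕂 E]
    [CompleteSpace E] {T : E →L[𝕂] E} {ψ : 𝔸 →L[𝕂] E} {x : 𝔸} {v : E}
    (h : ∀ k, (T ^ k) v = ψ (x ^ k)) : exp T v = ψ (exp x) := by
  have hT := (exp_series_hasSum_exp' (𝕂 := 𝕂) T).clm_apply v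
  have hx := (exp_series_hasSum_exp' (𝕂 := 𝕂) x).mapL ψ
  simp only [smul_apply, h, map_smul] at hT hx
  exact hT.unique hx

/-- `ad a` splits as left minus right multiplication by `a`; these commute, and their
exponentials are left multiplication by `exp a` and right multiplication by `exp (-a)`. -/
lemma exp_adCLM_apply (a b : 𝔸) : exp (adCLM 𝕂 a) b = exp a * b * exp (-a) := by
  set L := ContinuousLinearMap.mul 𝕂 𝔸 a
  set R := (ContinuousLinearMap.mul 𝕂 𝔸).flip a
  have hLR : Commute L (-R) := by
    refine Commute.neg_right ?_
    ext c
    simp [L, R, mul_assoc]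
  have hL : ∀ c, exp L c = exp a * c := fun c =>
    exp_apply_eq_of_pow_apply (ψ := (ContinuousLinearMap.mul 𝕂 𝔸).flip c) fun k => by
      induction k with
      | zero => simp
      | succ k ih => rw [pow_succ', mul_apply_eq_comp, ih, pow_succ']; simp [L, mul_assoc]
  have hR : exp (-R) b = b * exp (-a) :=
    exp_apply_eq_of_pow_apply (ψ := ContinuousLinearMap.mul 𝕂 𝔸 b) fun k => by
      induction k with
      | zero => simp
      | succ k ih => rw [pow_succ', mul_apply_eq_comp, ih, pow_succ]; simp [R, mul_assoc]
  have hrad : ∀ T : 𝔸 →L[𝕂] 𝔸, T ∈ Metric.eball 0 (expSeries 𝕂 (𝔸 →L[𝕂] 𝔸)).radius :=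
    fun T => (expSeries_radius_eq_top 𝕂 (𝔸 →L[𝕂] 𝔸)).symm ▸ edist_lt_top _ _
  rw [adCLM, sub_eq_add_neg, exp_add_of_commute_of_mem_ball hLR (hrad L) (hrad _),
    mul_apply_eq_comp, hR, hL, mul_assoc]

lemma hasSum_expSeries_adCLM_apply (x b : 𝔸) :
    HasSum (fun n => ((n ! : 𝕂)⁻¹ • adCLM 𝕂 x ^ n) b) (exp x * b * exp (-x)) := by
  rw [← exp_adCLM_apply (𝕂 := 𝕂)]
  exact (exp_series_hasSum_exp' (adCLM 𝕂 x)).clm_apply b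

lemma hasSum_expSeries_mul_expSeries_adCLM_apply (x y b : 𝔸) :
    HasSum (fun n => (∑ kl ∈ antidiagonal n,
      ((kl.1 ! : 𝕂)⁻¹ • adCLM 𝕂 x ^ kl.1) * ((kl.2 ! : 𝕂)⁻¹ • adCLM 𝕂 y ^ kl.2)) b)
      (exp x * (exp y * b * exp (-y)) * exp (-x)) := by
  rw [← exp_adCLM_apply (𝕂 := 𝕂), ← exp_adCLM_apply (𝕂 := 𝕂), ← mul_apply_eq_comp]
  exact (hasSum_expSeries_mul_expSeries (adCLM 𝕂 x) (adCLM 𝕂 y)).clm_apply b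

end BanachAlgebra

section Matrix

variable {m : ℕ}

@[simp]
lemma adPow_zero (A B : Matrix (Fin m) (Fin m) ℂ) : adPow A 0 B = B := rfl

lemma adPow_eq_adCLM_pow (A : Matrix (Fin m) (Fin m) ℂ) (j : ℕ) (B : Matrix (Fin m) (Fin m) ℂ) :
    adPow A j B = (adCLM ℝ A ^ j) B := by
  induction j with
  | zero => rfl
  | succ j ih =>
    rw [adPow, Function.iterate_succ_apply', ← adPow, ih, pow_succ', mul_apply_eq_comp,
      adCLM_apply, Ring.lie_def]

lemma adPow_smul (A : Matrix (Fin m) (Fin m) ℂ) (n : ℕ) (c : ℝ) (B : Matrix (Fin m) (Fin m) ℂ) :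
    adPow A n (c • B) = c • adPow A n B := by
  simp only [adPow_eq_adCLM_pow, map_smul]

lemma expSeries_adCLM_smul_apply (μ : ℝ) (A B : Matrix (Fin m) (Fin m) ℂ) (n : ℕ) :
    ((n ! : ℝ)⁻¹ • adCLM ℝ (μ • A) ^ n) B = ((n ! : ℝ)⁻¹ * μ ^ n) • adPow A n B := by
  rw [adCLM_smul, smul_pow, smul_smul, adPow_eq_adCLM_pow, smul_apply]

noncomputable def fOne (X Y : Matrix (Fin m) (Fin m) ℂ) (ℓ : ℕ) : Matrix (Fin m) (Fin m) ℂ :=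
  if ℓ = 0 then (1 / 2 : ℂ) • (X + Y) else
    ((-1 : ℝ) ^ ℓ / 2 ^ ℓ) •
      ((1 / (2 * (ℓ ! : ℝ))) • adPow Y ℓ X +
        ∑ j ∈ range (ℓ + 1), (1 / ((j ! : ℝ) * ((ℓ - j)! : ℝ))) • adPow Y (ℓ - j) (adPow X j Y))

lemma coeff_eq_fOne (X Y : Matrix (Fin m) (Fin m) ℂ) (l : ℝ) (n : ℕ) :
    (Pi.single 0 (-((1 / 2 : ℂ) • Y)) : ℕ → Matrix (Fin m) (Fin m) ℂ) n +
      (∑ kl ∈ antidiagonal n, ((kl.1 ! : ℝ)⁻¹ • adCLM ℝ ((-(l / 2)) • Y) ^ kl.1) *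
        ((kl.2 ! : ℝ)⁻¹ • adCLM ℝ ((-(l / 2)) • X) ^ kl.2)) Y +
      ((n ! : ℝ)⁻¹ • adCLM ℝ ((-(l / 2)) • Y) ^ n) ((1 / 2 : ℂ) • X) =
    l ^ n • fOne X Y n := by
  have half : (1 / 2 : ℂ) • X = (1 / 2 : ℝ) • X := by
    rw [RCLike.real_smul_eq_coe_smul (K := ℂ)]; norm_num
  have hμ : ∀ k, (-(l / 2)) ^ k = l ^ k * ((-1) ^ k / 2 ^ k) := fun k => by
    rw [show -(l / 2) = l * (-1 / 2) by ring, mul_pow, div_pow]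
  rcases Nat.eq_zero_or_pos n with rfl | hn
  · simp [fOne, RCLike.real_smul_eq_coe_smul (K := ℂ)]
    module
  · rw [Pi.single_eq_of_ne hn.ne', zero_add, ← Nat.sum_antidiagonal_swap,
      Nat.sum_antidiagonal_eq_sum_range_succ_mk, fOne, if_neg hn.ne']
    simp only [Prod.swap_prod_mk, _root_.sum_apply, mul_apply_eq_comp,
      expSeries_adCLM_smul_apply, half, adPow_smul, smul_smul, smul_add, Finset.smul_sum]
    rw [add_comm]
    congr 1
    · congr 1
      rw [hμ]
      field_simp
    · refine sum_congr rfl fun j hj => ?_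
      congr 1
      rw [mul_mul_mul_comm, ← pow_add, Nat.sub_add_cancel (mem_range_succ_iff.mp hj), hμ]
      field_simp

end Matrix

theorem F_one_series_expansion (m : ℕ) (X Y : Matrix (Fin m) (Fin m) ℂ)
    (f₁ : ℕ → Matrix (Fin m) (Fin m) ℂ)
    (hf₀ : f₁ 0 = (1 / 2 : ℂ) • (X + Y))
    (hf : ∀ ℓ : ℕ, 1 ≤ ℓ →
      f₁ ℓ = ((-1 : ℝ) ^ ℓ / 2 ^ ℓ) •
        ((1 / (2 * (ℓ.factorial : ℝ))) • adPow Y ℓ X +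
          ∑ j ∈ Finset.range (ℓ + 1),
            (1 / ((j.factorial : ℝ) * ((ℓ - j).factorial : ℝ))) •
              adPow Y (ℓ - j) (adPow X j Y))) :
    ∀ l : ℝ,
      Summable (fun ℓ : ℕ => ‖l ^ ℓ • f₁ ℓ‖) ∧
      HasSum (fun ℓ : ℕ => l ^ ℓ • f₁ ℓ)
        (-((1 / 2 : ℂ) • Y) +
          NormedSpace.exp ((-(l / 2)) • Y) *
            (NormedSpace.exp ((-(l / 2)) • X) * Y * NormedSpace.exp ((l / 2) • X) +
              (1 / 2 : ℂ) • X) *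
            NormedSpace.exp ((l / 2) • Y)) := by
  obtain rfl : f₁ = fOne X Y := funext fun ℓ => by
    rcases Nat.eq_zero_or_pos ℓ with rfl | hℓ
    · simpa [fOne] using hf₀
    · simpa [fOne, hℓ.ne'] using hf ℓ hℓ
  intro l
  have hsum := ((hasSum_pi_single 0 (-((1 / 2 : ℂ) • Y))).add
      (hasSum_expSeries_mul_expSeries_adCLM_apply (𝕂 := ℝ) ((-(l / 2)) • Y)
        ((-(l / 2)) • X) Y)).add
    (hasSum_expSeries_adCLM_apply (𝕂 := ℝ) ((-(l / 2)) • Y) ((1 / 2 : ℂ) • X))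
  have hnorm := (((hasSum_pi_single 0 ‖-((1 / 2 : ℂ) • Y)‖).summable).add
      (summable_norm_expSeries_mul_expSeries_adCLM_apply (𝕂 := ℝ) ((-(l / 2)) • Y)
        ((-(l / 2)) • X) Y)).add
    (summable_norm_expSeries_adCLM_apply (𝕂 := ℝ) ((-(l / 2)) • Y) ((1 / 2 : ℂ) • X))
  simp only [coeff_eq_fOne] at hsum
  refine ⟨hnorm.of_nonneg_of_le (fun _ => norm_nonneg _) fun n => ?_, ?_⟩
  · rw [← coeff_eq_fOne, ← Pi.apply_single (fun _ => (norm : Matrix (Fin m) (Fin m) ℂ → ℝ))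
      (fun _ => norm_zero)]
    exact norm_add₃_le
  · convert hsum using 1
    rw [neg_smul, neg_neg, neg_smul, neg_neg]
    noncomm_ring
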